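/- arXiv:1911.00267 — 2 statements merged into one kernel-verified Lean document; each statement's English description precedes it below -/
import Mathlib

section
/- For valid Gray code strings g, h of length B, g ⪯ h if and only if (max^rg_M{g,h}, min^rg_M{g,h}) = (h, g). -/
/-
The resolutions of a valid string of rank `n` are exactly the codewords `rg_B(v)` with
`n / 2 ≤ v ≤ (n + 1) / 2`; for the superposition this is because consecutive Gray codewords
differ in a single bit. Since `max^rg` and `min^rg` act on codewords as `max` and `min` on
values, the closures `max^rg_M{g,h}` and `min^rg_M{g,h}` are the superpositions of the codewords
with values in `max`- and `min`-images of two such intervals. For ranks `m ≤ n` these images are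
the intervals of rank `n` and `m`, which gives one direction; the other follows by exchanging
`g` and `h`, as the `max`-image is symmetric: if `h ≺ g` then `max^rg_M{g,h} = g ≠ h`.
-/

/-- A Kleene "bit": `some b` is a stable bit, `none` is metastable `M`. -/
abbrev KBit := Option Bool

/-- The `B`-bit binary reflected Gray code (bit `0` most significant). -/
def rg : (B : ℕ) → ℕ → (Fin B → Bool)
  | 0, _ => fun i => i.elim0
  | B + 1, x =>
      Fin.cons (decide (2 ^ B ≤ x)) (rg B (if x < 2 ^ B then x else 2 ^ (B + 1) - 1 - x))

/-- Decoding of a `B`-bit binary reflected Gray code string. -/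
def grayVal : (B : ℕ) → (Fin B → Bool) → ℕ
  | 0, _ => 0
  | B + 1, g =>
      if g 0 then 2 ^ (B + 1) - 1 - grayVal B (fun i => g i.succ)
      else grayVal B (fun i => g i.succ)

/-- The (stable) Gray codeword `rg_B(x)` viewed as a string over `{0,1,M}`. -/
def stableStr (B : ℕ) (x : ℕ) : Fin B → KBit := fun i => some (rg B x i)

/-- The superposition `rg_B(x) * rg_B(x+1)` of two consecutive Gray codewords. -/
def superStr (B : ℕ) (x : ℕ) : Fin B → KBit :=
  fun i => if rg B x i = rg B (x + 1) i then some (rg B x i) else none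

/-- Valid strings of length `B`: Gray codewords, or superpositions of two
consecutive Gray codewords. -/
def Valid (B : ℕ) : Set (Fin B → KBit) :=
  {g | (∃ x, x < 2 ^ B ∧ g = stableStr B x) ∨ (∃ x, x + 1 < 2 ^ B ∧ g = superStr B x)}

/-- The rank of a valid string in the total order `≺`: `rg_B(x)` has rank `2x` and
`rg_B(x) * rg_B(x+1)` has rank `2x + 1`. -/
noncomputable def rank (B : ℕ) (g : Fin B → KBit) : ℕ :=
  sInf {n | (∃ x, n = 2 * x ∧ g = stableStr B x) ∨ (∃ x, n = 2 * x + 1 ∧ g = superStr B x)}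

/-- The total order `⪯` on valid strings. -/
noncomputable def preceq (B : ℕ) (g h : Fin B → KBit) : Prop := rank B g ≤ rank B h

/-- The resolution of a string over `{0,1,M}`. -/
def res {B : ℕ} (x : Fin B → KBit) : Set (Fin B → Bool) :=
  {y | ∀ i : Fin B, ∀ b : Bool, x i = some b → y i = b}

open Classical in
/-- The superposition of a set of binary strings. -/
noncomputable def supStr {B : ℕ} (S : Set (Fin B → Bool)) : Fin B → KBit :=
  fun i =>
    if ∀ y ∈ S, y i = true then some true
    else if ∀ y ∈ S, y i = false then some false
    else none

/-- `max^rg` of two stable Gray code strings: the one of larger decoded value. -/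
def maxrg (B : ℕ) (g h : Fin B → Bool) : Fin B → Bool :=
  if grayVal B h ≤ grayVal B g then g else h

/-- `min^rg` of two stable Gray code strings: the one of smaller decoded value. -/
def minrg (B : ℕ) (g h : Fin B → Bool) : Fin B → Bool :=
  if grayVal B h ≤ grayVal B g then h else g

/-- The metastable closure `max^rg_M`, taken jointly over all resolutions of the pair. -/
noncomputable def maxrgM (B : ℕ) (g h : Fin B → KBit) : Fin B → KBit :=
  supStr {z | ∃ g' ∈ res g, ∃ h' ∈ res h, z = maxrg B g' h'}

/-- The metastable closure `min^rg_M`, taken jointly over all resolutions of the pair. -/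
noncomputable def minrgM (B : ℕ) (g h : Fin B → KBit) : Fin B → KBit :=
  supStr {z | ∃ g' ∈ res g, ∃ h' ∈ res h, z = minrg B g' h'}

lemma rg_succ_of_lt {B x : ℕ} (hx : x < 2 ^ B) : rg (B + 1) x = Fin.cons false (rg B x) := by
  simp [rg, hx]

lemma rg_succ_of_le {B x : ℕ} (hx : 2 ^ B ≤ x) :
    rg (B + 1) x = Fin.cons true (rg B (2 ^ (B + 1) - 1 - x)) := by
  simp [rg, hx, Nat.not_lt.mpr hx]

lemma grayVal_cons (B : ℕ) (b : Bool) (t : Fin B → Bool) :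
    grayVal (B + 1) (Fin.cons b t) = if b then 2 ^ (B + 1) - 1 - grayVal B t else grayVal B t := by
  simp [grayVal]

lemma grayVal_rg : ∀ {B x : ℕ}, x < 2 ^ B → grayVal B (rg B x) = x
  | 0, x, hx => by simp at hx; simp [hx, grayVal]
  | B + 1, x, hx => by
    rcases Nat.lt_or_ge x (2 ^ B) with hlt | hge
    · rw [rg_succ_of_lt hlt, grayVal_cons, if_neg Bool.false_ne_true, grayVal_rg hlt]
    · have hpow : 2 ^ (B + 1) = 2 * 2 ^ B := pow_succ' 2 B
      rw [rg_succ_of_le hge, grayVal_cons, if_pos rfl, grayVal_rg (by omega)]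
      omega

lemma rg_injOn (B : ℕ) : Set.InjOn (rg B) (Set.Iio (2 ^ B)) := fun x hx y hy h => by
  rw [← grayVal_rg hx, ← grayVal_rg hy, h]

lemma rg_add_one_flips_one_bit :
    ∀ {B x : ℕ}, x + 1 < 2 ^ B → ∃ i, ∀ j, rg B x j = rg B (x + 1) j ↔ j ≠ i
  | 0, x, hx => by simp at hx
  | B + 1, x, hx => by
    have hpow : 2 ^ (B + 1) = 2 * 2 ^ B := pow_succ' 2 B
    have flip_tail : ∀ {b : Bool} {t t' : Fin B → Bool} {i : Fin B},
        (∀ j, t j = t' j ↔ j ≠ i) →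
          ∀ j, (Fin.cons b t : Fin (B + 1) → Bool) j = (Fin.cons b t' : Fin (B + 1) → Bool) j
            ↔ j ≠ i.succ := by
      intro b t t' i h j
      cases j using Fin.cases
      · simpa using (Fin.succ_ne_zero i).symm
      · simp [h]
    rcases lt_trichotomy (x + 1) (2 ^ B) with hlt | heq | hgt
    · obtain ⟨i, hi⟩ := rg_add_one_flips_one_bit hlt
      rw [rg_succ_of_lt (by omega), rg_succ_of_lt hlt]
      exact ⟨i.succ, flip_tail hi⟩
    · refine ⟨0, fun j => ?_⟩
      rw [rg_succ_of_lt (by omega), rg_succ_of_le heq.ge,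
        show 2 ^ (B + 1) - 1 - (x + 1) = x by omega]
      cases j using Fin.cases <;> simp [Fin.succ_ne_zero]
    · obtain ⟨i, hi⟩ :=
        rg_add_one_flips_one_bit (B := B) (x := 2 ^ (B + 1) - 1 - (x + 1)) (by omega)
      rw [rg_succ_of_le (by omega), rg_succ_of_le (by omega),
        show 2 ^ (B + 1) - 1 - x = 2 ^ (B + 1) - 1 - (x + 1) + 1 by omega]
      exact ⟨i.succ, flip_tail fun j => by rw [eq_comm, hi]⟩

lemma supStr_singleton {B : ℕ} (u : Fin B → Bool) : supStr {u} = fun i => some (u i) := by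
  funext i
  cases hu : u i <;> simp [supStr, hu]

lemma supStr_pair {B : ℕ} (u v : Fin B → Bool) :
    supStr {u, v} = fun i => if u i = v i then some (u i) else none := by
  funext i
  cases hu : u i <;> cases hv : v i <;> simp [supStr, hu, hv]

lemma res_stableStr (B x : ℕ) : res (stableStr B x) = {rg B x} := by
  ext y
  simp [res, stableStr, funext_iff]

lemma res_superStr {B x : ℕ} (hx : x + 1 < 2 ^ B) :
    res (superStr B x) = {rg B x, rg B (x + 1)} := by
  obtain ⟨i, hi⟩ := rg_add_one_flips_one_bit hx
  ext y
  have mem_res : y ∈ res (superStr B x) ↔ ∀ j, j ≠ i → y j = rg B x j := by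
    refine forall_congr' fun j => ?_
    rw [← hi j, superStr]
    split_ifs with h <;> simp [h]
  rw [mem_res, Set.mem_insert_iff, Set.mem_singleton_iff]
  constructor
  · intro hy
    by_cases hyi : y i = rg B x i
    · refine Or.inl (funext fun j => ?_)
      rcases eq_or_ne j i with rfl | hj
      exacts [hyi, hy j hj]
    · refine Or.inr (funext fun j => ?_)
      rcases eq_or_ne j i with rfl | hj
      · have hflip : rg B x j ≠ rg B (x + 1) j := fun h => (hi j).mp h rfl
        rw [Bool.eq_not_iff.mpr hyi, Bool.eq_not_iff.mpr hflip.symm]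
      · rw [hy j hj, (hi j).mpr hj]
  · rintro (rfl | rfl) j hj
    exacts [rfl, ((hi j).mpr hj).symm]

lemma maxrg_rg {B a b : ℕ} (ha : a < 2 ^ B) (hb : b < 2 ^ B) :
    maxrg B (rg B a) (rg B b) = rg B (max a b) := by
  rw [maxrg, grayVal_rg ha, grayVal_rg hb]
  split_ifs with h
  exacts [congrArg _ (max_eq_left h).symm, congrArg _ (max_eq_right (by omega)).symm]

lemma minrg_rg {B a b : ℕ} (ha : a < 2 ^ B) (hb : b < 2 ^ B) :
    minrg B (rg B a) (rg B b) = rg B (min a b) := by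
  rw [minrg, grayVal_rg ha, grayVal_rg hb]
  split_ifs with h
  exacts [congrArg _ (min_eq_right h).symm, congrArg _ (min_eq_left (by omega)).symm]

lemma setOf_rg_image2 {B : ℕ} {F : (Fin B → Bool) → (Fin B → Bool) → Fin B → Bool}
    {f : ℕ → ℕ → ℕ} {I J : Set ℕ}
    (hI : I ⊆ Set.Iio (2 ^ B)) (hJ : J ⊆ Set.Iio (2 ^ B))
    (hF : ∀ a < 2 ^ B, ∀ b < 2 ^ B, F (rg B a) (rg B b) = rg B (f a b)) :
    {z | ∃ g' ∈ rg B '' I, ∃ h' ∈ rg B '' J, z = F g' h'} = rg B '' Set.image2 f I J :=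
  calc {z | ∃ g' ∈ rg B '' I, ∃ h' ∈ rg B '' J, z = F g' h'}
      = Set.image2 F (rg B '' I) (rg B '' J) := by ext; simp [Set.mem_image2, eq_comm]
    _ = Set.image2 (fun a b => F (rg B a) (rg B b)) I J := by
      rw [Set.image2_image_left, Set.image2_image_right]
    _ = rg B '' Set.image2 f I J := by
      rw [Set.image_image2]
      exact Set.image2_congr fun a ha b hb => hF a (hI ha) b (hJ hb)

lemma Set.image2_max_Icc_Icc {α : Type*} [LinearOrder α] {a a' b b' : α} (ha : a ≤ a')
    (hab : a ≤ b) (hab' : a' ≤ b') :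
    Set.image2 max (Set.Icc a a') (Set.Icc b b') = Set.Icc b b' := by
  apply Set.Subset.antisymm
  · rintro _ ⟨x, hx, y, hy, rfl⟩
    exact ⟨le_max_of_le_right hy.1, max_le (hx.2.trans hab') hy.2⟩
  · intro y hy
    exact ⟨a, ⟨le_rfl, ha⟩, y, hy, max_eq_right (hab.trans hy.1)⟩

lemma Set.image2_min_Icc_Icc {α : Type*} [LinearOrder α] {a a' b b' : α} (hb : b ≤ b')
    (hab : a ≤ b) (hab' : a' ≤ b') :
    Set.image2 min (Set.Icc a a') (Set.Icc b b') = Set.Icc a a' := by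
  apply Set.Subset.antisymm
  · rintro _ ⟨x, hx, y, hy, rfl⟩
    exact ⟨le_min hx.1 (hab.trans hy.1), min_le_of_left_le hx.2⟩
  · intro x hx
    exact ⟨x, hx, b', ⟨hb, le_rfl⟩, min_eq_left (hx.2.trans hab')⟩

/-- `n` is an index of `g` in the set whose infimum defines `rank B g`. -/
def Represents (B n : ℕ) (g : Fin B → KBit) : Prop :=
  (∃ x, n = 2 * x ∧ g = stableStr B x) ∨ (∃ x, n = 2 * x + 1 ∧ g = superStr B x)

def valuesOfRank (n : ℕ) : Set ℕ := Set.Icc (n / 2) ((n + 1) / 2)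

lemma valuesOfRank_two_mul (x : ℕ) : valuesOfRank (2 * x) = {x} := by
  rw [valuesOfRank, show 2 * x / 2 = x by omega, show (2 * x + 1) / 2 = x by omega, Set.Icc_self]

lemma valuesOfRank_two_mul_add_one (x : ℕ) : valuesOfRank (2 * x + 1) = {x, x + 1} := by
  ext v
  simp only [valuesOfRank, Set.mem_Icc, Set.mem_insert_iff, Set.mem_singleton_iff]
  omega

lemma valuesOfRank_subset_Iio {B n : ℕ} (hn : (n + 1) / 2 < 2 ^ B) :
    valuesOfRank n ⊆ Set.Iio (2 ^ B) :=
  fun _ hv => lt_of_le_of_lt hv.2 hn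

lemma image2_max_valuesOfRank {m n : ℕ} (h : m ≤ n) :
    Set.image2 max (valuesOfRank m) (valuesOfRank n) = valuesOfRank n :=
  Set.image2_max_Icc_Icc (by omega) (Nat.div_le_div_right h) (Nat.div_le_div_right (by omega))

lemma image2_min_valuesOfRank {m n : ℕ} (h : m ≤ n) :
    Set.image2 min (valuesOfRank m) (valuesOfRank n) = valuesOfRank m :=
  Set.image2_min_Icc_Icc (by omega) (Nat.div_le_div_right h) (Nat.div_le_div_right (by omega))

namespace Represents

variable {B n : ℕ} {g : Fin B → KBit}

lemma eq_supStr (h : Represents B n g) : g = supStr (rg B '' valuesOfRank n) := by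
  rcases h with ⟨x, rfl, rfl⟩ | ⟨x, rfl, rfl⟩
  · rw [valuesOfRank_two_mul, Set.image_singleton, supStr_singleton]; rfl
  · rw [valuesOfRank_two_mul_add_one, Set.image_pair, supStr_pair]; rfl

lemma res_eq (h : Represents B n g) (hn : (n + 1) / 2 < 2 ^ B) :
    res g = rg B '' valuesOfRank n := by
  rcases h with ⟨x, rfl, rfl⟩ | ⟨x, rfl, rfl⟩
  · rw [valuesOfRank_two_mul, Set.image_singleton, res_stableStr]
  · rw [valuesOfRank_two_mul_add_one, Set.image_pair, res_superStr (by omega)]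

lemma le {m : ℕ} (hn : Represents B n g) (hn' : (n + 1) / 2 < 2 ^ B) (hm : Represents B m g) :
    n ≤ m := by
  by_contra! hlt
  have hm' : (m + 1) / 2 < 2 ^ B := by omega
  have h := (hn.res_eq hn').symm.trans (hm.res_eq hm')
  rw [(rg_injOn B).image_eq_image_iff (valuesOfRank_subset_Iio hn') (valuesOfRank_subset_Iio hm'),
    valuesOfRank, valuesOfRank, Set.Icc_eq_Icc_iff (by omega)] at h
  omega

end Represents

lemma represents_rank_of_valid {B : ℕ} {g : Fin B → KBit} (hg : g ∈ Valid B) :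
    Represents B (rank B g) g ∧ (rank B g + 1) / 2 < 2 ^ B := by
  obtain ⟨n, hn, hn'⟩ : ∃ n, Represents B n g ∧ (n + 1) / 2 < 2 ^ B := by
    rcases hg with ⟨x, hx, rfl⟩ | ⟨x, hx, rfl⟩
    · exact ⟨2 * x, Or.inl ⟨x, rfl, rfl⟩, by omega⟩
    · exact ⟨2 * x + 1, Or.inr ⟨x, rfl, rfl⟩, by omega⟩
  have hrank : rank B g = n := IsLeast.csInf_eq ⟨hn, fun m hm => hn.le hn' hm⟩
  exact hrank ▸ ⟨hn, hn'⟩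

section Valid

variable {B : ℕ} {g h : Fin B → KBit}

lemma maxrgM_eq (hg : g ∈ Valid B) (hh : h ∈ Valid B) :
    maxrgM B g h =
      supStr (rg B '' Set.image2 max (valuesOfRank (rank B g)) (valuesOfRank (rank B h))) := by
  obtain ⟨hg, hg'⟩ := represents_rank_of_valid hg
  obtain ⟨hh, hh'⟩ := represents_rank_of_valid hh
  rw [maxrgM, hg.res_eq hg', hh.res_eq hh',
    setOf_rg_image2 (valuesOfRank_subset_Iio hg') (valuesOfRank_subset_Iio hh')
      fun _ ha _ hb => maxrg_rg ha hb]

lemma minrgM_eq (hg : g ∈ Valid B) (hh : h ∈ Valid B) :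
    minrgM B g h =
      supStr (rg B '' Set.image2 min (valuesOfRank (rank B g)) (valuesOfRank (rank B h))) := by
  obtain ⟨hg, hg'⟩ := represents_rank_of_valid hg
  obtain ⟨hh, hh'⟩ := represents_rank_of_valid hh
  rw [minrgM, hg.res_eq hg', hh.res_eq hh',
    setOf_rg_image2 (valuesOfRank_subset_Iio hg') (valuesOfRank_subset_Iio hh')
      fun _ ha _ hb => minrg_rg ha hb]

lemma maxrgM_comm (hg : g ∈ Valid B) (hh : h ∈ Valid B) : maxrgM B g h = maxrgM B h g := by
  rw [maxrgM_eq hg hh, maxrgM_eq hh hg, Set.image2_comm max_comm]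

lemma maxrgM_minrgM_of_preceq (hg : g ∈ Valid B) (hh : h ∈ Valid B) (hgh : preceq B g h) :
    maxrgM B g h = h ∧ minrgM B g h = g := by
  rw [maxrgM_eq hg hh, minrgM_eq hg hh, image2_max_valuesOfRank hgh, image2_min_valuesOfRank hgh]
  exact ⟨(represents_rank_of_valid hh).1.eq_supStr.symm,
    (represents_rank_of_valid hg).1.eq_supStr.symm⟩

end Valid

/-- For valid Gray code strings `g, h` of length `B`:
`g ⪯ h` iff `(max^rg_M{g,h}, min^rg_M{g,h}) = (h, g)`. -/
theorem twosort_closure (B : ℕ) (g h : Fin B → KBit)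
    (hg : g ∈ Valid B) (hh : h ∈ Valid B) :
    preceq B g h ↔ (maxrgM B g h = h ∧ minrgM B g h = g) := by
  refine ⟨maxrgM_minrgM_of_preceq hg hh, fun ⟨hmax, _⟩ => ?_⟩
  by_contra hgh
  have hhg : maxrgM B h g = g := (maxrgM_minrgM_of_preceq hh hg (le_of_not_ge hgh)).1
  rw [maxrgM_comm hg hh, hhg] at hmax
  exact hgh (hmax ▸ le_rfl)
end

section
/- For valid strings g, h ∈ Valid_B and all i ∈ [1,B], the metastable prefix state satisfies s^{(i)}_M = g_1h_1 ⋄_M g_2h_2 ⋄_M ... ⋄_M g_ih_i; i.e., repeated application of the closure ⋄_M of the FSM transition operator computes the closure of the i-step state. -/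
/-- The transition operator `⋄` of the Gray-code comparison FSM:
`00 ⋄ x = x`; `01` and `10` are absorbing; `11 ⋄ 00 = 11`, `11 ⋄ 01 = 10`,
`11 ⋄ 11 = 00`, `11 ⋄ 10 = 01`. -/
def diamond : Bool × Bool → Bool × Bool → Bool × Bool
  | (false, false), x => x
  | (false, true), _ => (false, true)
  | (true, false), _ => (true, false)
  | (true, true), (a, b) => (!a, !b)

/-- The state `s^{(i)}(g,h)` of the Gray-code comparison FSM after processing the
input pairs `g_1 h_1, …, g_i h_i`, starting from state `00`. -/
def fsmState (B : ℕ) (g h : Fin B → Bool) (i : ℕ) : Bool × Bool :=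
  (List.range i).foldl
    (fun s j => if hj : j < B then diamond s (g ⟨j, hj⟩, h ⟨j, hj⟩) else s)
    (false, false)

/-- Resolutions of a possibly-metastable pair. -/
def resP (p : KBit × KBit) : Set (Bool × Bool) :=
  {q | (∀ b : Bool, p.1 = some b → q.1 = b) ∧ (∀ b : Bool, p.2 = some b → q.2 = b)}

open Classical in
/-- Bitwise superposition of a set of binary pairs. -/
noncomputable def supP (S : Set (Bool × Bool)) : KBit × KBit :=
  ((if ∀ s ∈ S, s.1 = true then some true
    else if ∀ s ∈ S, s.1 = false then some false else none),
   (if ∀ s ∈ S, s.2 = true then some true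
    else if ∀ s ∈ S, s.2 = false then some false else none))

/-- `s^{(i)}_M(g,h)`: the superposition, over all resolutions `g' ∈ res(g)` and
`h' ∈ res(h)`, of the FSM state after processing the first `i` bit pairs. -/
noncomputable def sM (B : ℕ) (g h : Fin B → KBit) (i : ℕ) : KBit × KBit :=
  supP {s | ∃ g' ∈ res g, ∃ h' ∈ res h, s = fsmState B g' h' i}

/-- The metastable closure of a binary operator on binary pairs. -/
noncomputable def closure2 (f : Bool × Bool → Bool × Bool → Bool × Bool)
    (x y : KBit × KBit) : KBit × KBit :=
  supP {z | ∃ x' ∈ resP x, ∃ y' ∈ resP y, z = f x' y'}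

/-- The metastable closure `⋄_M` of the FSM transition operator `⋄`. -/
noncomputable def diamondM : KBit × KBit → KBit × KBit → KBit × KBit :=
  closure2 diamond

/-- `g_1h_1 ⋄_M g_2h_2 ⋄_M … ⋄_M g_ih_i`, evaluated left to right starting
from the start state `00`. -/
noncomputable def foldDM (B : ℕ) (g h : Fin B → KBit) (i : ℕ) : KBit × KBit :=
  (List.range i).foldl
    (fun s j => if hj : j < B then diamondM s (g ⟨j, hj⟩, h ⟨j, hj⟩) else s)
    (some false, some false)

lemma res_nonempty {B : ℕ} (g : Fin B → KBit) : (res g).Nonempty :=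
  ⟨fun j => (g j).getD false, fun j b hb => by simp [hb]⟩

lemma fsmState_succ (B : ℕ) (g h : Fin B → Bool) (i : ℕ) :
    fsmState B g h (i + 1) =
      if hj : i < B then diamond (fsmState B g h i) (g ⟨i, hj⟩, h ⟨i, hj⟩)
      else fsmState B g h i := by
  unfold fsmState
  rw [List.range_succ, List.foldl_append]
  rfl

lemma foldDM_succ (B : ℕ) (g h : Fin B → KBit) (i : ℕ) :
    foldDM B g h (i + 1) =
      if hj : i < B then diamondM (foldDM B g h i) (g ⟨i, hj⟩, h ⟨i, hj⟩)
      else foldDM B g h i := by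
  unfold foldDM
  rw [List.range_succ, List.foldl_append]
  rfl

lemma fsmState_congr {B : ℕ} {g h g' h' : Fin B → Bool} (i : ℕ)
    (hg : ∀ j : Fin B, (j : ℕ) < i → g j = g' j)
    (hh : ∀ j : Fin B, (j : ℕ) < i → h j = h' j) :
    fsmState B g h i = fsmState B g' h' i := by
  induction i with
  | zero => rfl
  | succ i ih =>
    have hg' : ∀ j : Fin B, (j : ℕ) < i → g j = g' j :=
      fun j hj => hg j (hj.trans (Nat.lt_succ_self i))
    have hh' : ∀ j : Fin B, (j : ℕ) < i → h j = h' j :=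
      fun j hj => hh j (hj.trans (Nat.lt_succ_self i))
    rw [fsmState_succ, fsmState_succ, ih hg' hh']
    split
    · next hj =>
      rw [hg ⟨i, hj⟩ (Nat.lt_succ_self i), hh ⟨i, hj⟩ (Nat.lt_succ_self i)]
    · rfl

lemma mem_resP_supP {S : Set (Bool × Bool)} {s : Bool × Bool} (hs : s ∈ S) :
    s ∈ resP (supP S) := by
  constructor
  · intro b hb
    simp only [supP] at hb
    split at hb
    · next h => cases hb; exact h s hs
    · split at hb
      · next h => cases hb; exact h s hs
      · cases hb
  · intro b hb
    simp only [supP] at hb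
    split at hb
    · next h => cases hb; exact h s hs
    · split at hb
      · next h => cases hb; exact h s hs
      · cases hb

lemma resP_supP_cases {S : Set (Bool × Bool)} (hS : S.Nonempty) {s' : Bool × Bool}
    (h : s' ∈ resP (supP S)) :
    s' ∈ S ∨ ((false, false) ∈ S ∧ (true, true) ∈ S) ∨
      ((false, true) ∈ S ∧ (true, false) ∈ S) := by
  obtain ⟨h1, h2⟩ := h
  have key1 : (∀ s ∈ S, s.1 = s'.1) ∨
      ((∃ s ∈ S, s.1 = true) ∧ (∃ s ∈ S, s.1 = false)) := by
    by_cases A1 : ∀ s ∈ S, s.1 = true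
    · left
      have : s'.1 = true := h1 true (by simp only [supP, if_pos A1])
      rw [this]; exact A1
    · by_cases A0 : ∀ s ∈ S, s.1 = false
      · left
        have : s'.1 = false := h1 false (by simp only [supP, if_neg A1, if_pos A0])
        rw [this]; exact A0
      · right
        push_neg at A1 A0
        obtain ⟨u, hu, hu1⟩ := A1
        obtain ⟨v, hv, hv1⟩ := A0
        exact ⟨⟨v, hv, by revert hv1; cases v.1 <;> simp⟩,
               ⟨u, hu, by revert hu1; cases u.1 <;> simp⟩⟩
  have key2 : (∀ s ∈ S, s.2 = s'.2) ∨
      ((∃ s ∈ S, s.2 = true) ∧ (∃ s ∈ S, s.2 = false)) := by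
    by_cases A1 : ∀ s ∈ S, s.2 = true
    · left
      have : s'.2 = true := h2 true (by simp only [supP, if_pos A1])
      rw [this]; exact A1
    · by_cases A0 : ∀ s ∈ S, s.2 = false
      · left
        have : s'.2 = false := h2 false (by simp only [supP, if_neg A1, if_pos A0])
        rw [this]; exact A0
      · right
        push_neg at A1 A0
        obtain ⟨u, hu, hu1⟩ := A1
        obtain ⟨v, hv, hv1⟩ := A0
        exact ⟨⟨v, hv, by revert hv1; cases v.2 <;> simp⟩,
               ⟨u, hu, by revert hu1; cases u.2 <;> simp⟩⟩
  rcases key1 with k1 | ⟨⟨p, hpS, hp⟩, ⟨r, hrS, hr⟩⟩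
  · rcases key2 with k2 | ⟨⟨u, huS, hu⟩, ⟨v, hvS, hv⟩⟩
    · obtain ⟨s0, hs0⟩ := hS
      left
      have : s0 = s' := Prod.ext (k1 s0 hs0) (k2 s0 hs0)
      rwa [← this]
    · left
      cases hs2 : s'.2
      · have : v = s' := Prod.ext (k1 v hvS) (by rw [hv, hs2])
        rwa [← this]
      · have : u = s' := Prod.ext (k1 u huS) (by rw [hu, hs2])
        rwa [← this]
  · rcases key2 with k2 | ⟨⟨u, huS, hu⟩, ⟨v, hvS, hv⟩⟩
    · left
      cases hs1 : s'.1
      · have : r = s' := Prod.ext (by rw [hr, hs1]) (k2 r hrS)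
        rwa [← this]
      · have : p = s' := Prod.ext (by rw [hp, hs1]) (k2 p hpS)
        rwa [← this]
    · right
      by_cases h00 : (false, false) ∈ S
      · by_cases h11 : (true, true) ∈ S
        · exact Or.inl ⟨h00, h11⟩
        · -- p has first coord true; if p.2 = true then p = (t,t) ∈ S, contra
          refine Or.inr ⟨?_, ?_⟩
          · have : u = (false, true) := by
              rcases u with ⟨ua, ub⟩
              cases ua
              · simp at hu; rw [hu]
              · exfalso; simp at hu; rw [hu] at huS; exact h11 huS
            rwa [← this]
          · have : p = (true, false) := by
              rcases p with ⟨pa, pb⟩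
              cases pb
              · simp at hp; rw [hp]
              · exfalso; simp at hp; rw [hp] at hpS; exact h11 hpS
            rwa [← this]
      · refine Or.inr ⟨?_, ?_⟩
        · have : r = (false, true) := by
            rcases r with ⟨ra, rb⟩
            cases rb
            · exfalso; simp at hr; rw [hr] at hrS; exact h00 hrS
            · simp at hr; rw [hr]
          rwa [← this]
        · have : v = (true, false) := by
            rcases v with ⟨va, vb⟩
            cases va
            · exfalso; simp at hv; rw [hv] at hvS; exact h00 hvS
            · simp at hv; rw [hv]
          rwa [← this]

lemma supP_congr {S T : Set (Bool × Bool)}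
    (h1 : ∀ b, (∀ s ∈ S, s.1 = b) ↔ (∀ s ∈ T, s.1 = b))
    (h2 : ∀ b, (∀ s ∈ S, s.2 = b) ↔ (∀ s ∈ T, s.2 = b)) :
    supP S = supP T := by
  classical
  unfold supP
  exact Prod.ext (if_congr (h1 true) rfl (if_congr (h1 false) rfl rfl))
    (if_congr (h2 true) rfl (if_congr (h2 false) rfl rfl))

lemma core_step (S R : Set (Bool × Bool)) (hS : S.Nonempty) :
    supP {z | ∃ s ∈ S, ∃ q ∈ R, z = diamond s q} =
      supP {z | ∃ s ∈ resP (supP S), ∃ q ∈ R, z = diamond s q} := by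
  apply supP_congr <;> intro b <;> constructor
  · rintro H z ⟨s', hs', q, hq, rfl⟩
    rcases resP_supP_cases hS hs' with hmem | ⟨h00, h11⟩ | ⟨h01, h10⟩
    · exact H _ ⟨s', hmem, q, hq, rfl⟩
    · have e0 := H _ ⟨_, h00, q, hq, rfl⟩
      have e1 := H _ ⟨_, h11, q, hq, rfl⟩
      exfalso
      rcases q with ⟨qa, qb⟩
      simp only [diamond] at e0 e1
      rw [← e0] at e1
      revert e1; cases qa <;> simp
    · have e0 := H _ ⟨_, h01, q, hq, rfl⟩
      have e1 := H _ ⟨_, h10, q, hq, rfl⟩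
      exfalso
      rcases q with ⟨qa, qb⟩
      simp only [diamond] at e0 e1
      rw [← e0] at e1
      simp at e1
  · rintro H z ⟨s', hs', q, hq, rfl⟩
    exact H _ ⟨s', mem_resP_supP hs', q, hq, rfl⟩
  · rintro H z ⟨s', hs', q, hq, rfl⟩
    rcases resP_supP_cases hS hs' with hmem | ⟨h00, h11⟩ | ⟨h01, h10⟩
    · exact H _ ⟨s', hmem, q, hq, rfl⟩
    · have e0 := H _ ⟨_, h00, q, hq, rfl⟩
      have e1 := H _ ⟨_, h11, q, hq, rfl⟩
      exfalso
      rcases q with ⟨qa, qb⟩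
      simp only [diamond] at e0 e1
      rw [← e0] at e1
      revert e1; cases qb <;> simp
    · have e0 := H _ ⟨_, h01, q, hq, rfl⟩
      have e1 := H _ ⟨_, h10, q, hq, rfl⟩
      exfalso
      rcases q with ⟨qa, qb⟩
      simp only [diamond] at e0 e1
      rw [← e0] at e1
      simp at e1
  · rintro H z ⟨s', hs', q, hq, rfl⟩
    exact H _ ⟨s', mem_resP_supP hs', q, hq, rfl⟩

lemma setA_eq (B : ℕ) (g h : Fin B → KBit) (i : ℕ) (hiB : i < B) :
    {s | ∃ g' ∈ res g, ∃ h' ∈ res h, s = fsmState B g' h' (i + 1)} =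
      {z | ∃ s ∈ {s | ∃ g' ∈ res g, ∃ h' ∈ res h, s = fsmState B g' h' i},
        ∃ q ∈ resP (g ⟨i, hiB⟩, h ⟨i, hiB⟩), z = diamond s q} := by
  ext z
  constructor
  · rintro ⟨g', hg', h', hh', rfl⟩
    refine ⟨fsmState B g' h' i, ⟨g', hg', h', hh', rfl⟩,
      (g' ⟨i, hiB⟩, h' ⟨i, hiB⟩), ⟨fun b hb => hg' _ b hb, fun b hb => hh' _ b hb⟩, ?_⟩
    rw [fsmState_succ, dif_pos hiB]
  · rintro ⟨s, ⟨g1, hg1, h1, hh1, rfl⟩, ⟨a, c⟩, ⟨hqa, hqc⟩, rfl⟩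
    refine ⟨fun j => if (j : ℕ) < i then g1 j else if j = ⟨i, hiB⟩ then a
        else (g j).getD false, ?_,
      fun j => if (j : ℕ) < i then h1 j else if j = ⟨i, hiB⟩ then c
        else (h j).getD false, ?_, ?_⟩
    · intro j b hb
      by_cases hj : (j : ℕ) < i
      · simpa [hj] using hg1 j b hb
      · by_cases hji : j = ⟨i, hiB⟩
        · subst hji
          simpa [hj] using (hqa b hb)
        · simp [hj, hji, hb]
    · intro j b hb
      by_cases hj : (j : ℕ) < i
      · simpa [hj] using hh1 j b hb
      · by_cases hji : j = ⟨i, hiB⟩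
        · subst hji
          simpa [hj] using (hqc b hb)
        · simp [hj, hji, hb]
    · rw [fsmState_succ, dif_pos hiB]
      have hpref : fsmState B
          (fun j => if (j : ℕ) < i then g1 j else if j = ⟨i, hiB⟩ then a
            else (g j).getD false)
          (fun j => if (j : ℕ) < i then h1 j else if j = ⟨i, hiB⟩ then c
            else (h j).getD false) i = fsmState B g1 h1 i := by
        apply fsmState_congr <;> intro j hj <;> simp [hj]
      rw [hpref]
      simp

/-- For valid strings `g, h` and all `i ∈ [1,B]`, the metastable prefix state satisfies
`s^{(i)}_M = g_1h_1 ⋄_M g_2h_2 ⋄_M … ⋄_M g_ih_i`. -/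
theorem sM_eq_foldDM (B : ℕ) (g h : Fin B → KBit) (hg : g ∈ Valid B) (hh : h ∈ Valid B)
    (i : ℕ) (hi1 : 1 ≤ i) (hiB : i ≤ B) :
    sM B g h i = foldDM B g h i := by
  clear hi1 hg hh
  revert hiB
  induction i with
  | zero =>
    intro hiB
    obtain ⟨g0, hg0⟩ := res_nonempty g
    obtain ⟨h0, hh0⟩ := res_nonempty h
    have hset : {s | ∃ g' ∈ res g, ∃ h' ∈ res h, s = fsmState B g' h' 0} =
        {s : Bool × Bool | s = (false, false)} := by
      ext z
      constructor
      · rintro ⟨g', _, h', _, rfl⟩; rfl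
      · rintro rfl; exact ⟨g0, hg0, h0, hh0, rfl⟩
    show supP _ = _
    rw [hset]
    have : foldDM B g h 0 = (some false, some false) := rfl
    rw [this]
    simp only [supP]
    norm_num [Set.mem_setOf_eq]
  | succ i ih =>
    intro hiB
    have hiB' : i < B := hiB
    have hIH := ih (Nat.le_of_lt hiB')
    have hSne : Set.Nonempty {s | ∃ g' ∈ res g, ∃ h' ∈ res h, s = fsmState B g' h' i} := by
      obtain ⟨g0, hg0⟩ := res_nonempty g
      obtain ⟨h0, hh0⟩ := res_nonempty h
      exact ⟨_, g0, hg0, h0, hh0, rfl⟩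
    have step : sM B g h (i + 1) =
        diamondM (sM B g h i) (g ⟨i, hiB'⟩, h ⟨i, hiB'⟩) := by
      show supP _ = _
      rw [setA_eq B g h i hiB']
      exact core_step _ _ hSne
    rw [step, hIH, foldDM_succ, dif_pos hiB']
end
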